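/- arXiv:2006.10339 — 2 statements merged into one kernel-verified Lean document; each statement's English description precedes it below -/
import Mathlib

section
/- For every natural number M > 0 there exist a finite nonempty set Δ, a primitive transitive permutation group T ≤ Sym(Δ) which is a nonabelian simple group, a point α ∈ Δ, and an intersecting subgroup S ≤ T with |S| > M·|T_α|. (Such groups are obtained from PSL(2, 2^f) ≅ PGL(2, 2^f) acting on unordered pairs of projective points; hence ρ can be arbitrarily large for almost simple primitive groups.) -/
/-!
Let `q = 2 ^ (M + 2)` and `F = 𝔽_q`. In characteristic 2 the centre of `SL(2, F)` is trivial, so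
`SL(2, F) ≅ PSL(2, F)` is simple; it acts faithfully on the set `Δ` of unordered pairs of points of
the projective line, a set of size `q (q + 1) / 2`.

The action on the line is 3-transitive (every element of `F` is a square), and no element fixing
two points swaps two others (such an element would be a diagonal `diag(t, t⁻¹)` with `t ^ 4 = 1`,
and `t = 1` in characteristic 2).
Hence a block for the action on `Δ` containing two pairs is everything: if the pairs meet,
3-transitivity moves them onto all pairs; if they are disjoint, an element fixing the first one
produces from the second one a pair meeting it. So the action on `Δ` is primitive.

The stabilizer `B` of the point `∞` is intersecting on `Δ`: an element of `B` fixes a second point,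
hence the pair of its fixed points, or it is an involution, hence fixes a pair `{y, g • y}`.
Finally, by orbit–stabilizer, `|B| / |T_α| = |Δ| / (q + 1) = q / 2 > M`.
-/

open MulAction Matrix Projectivization Set.powersetCard
open scoped Pointwise LinearAlgebra.Projectivization MatrixGroups

namespace Function.Embedding

variable {α : Type*} {a b c : α}

def embFinThree (hab : a ≠ b) (hac : a ≠ c) (hbc : b ≠ c) : Fin 3 ↪ α :=
  ⟨![a, b, c], by intro i j; fin_cases i <;> fin_cases j <;> simp [*, eq_comm]⟩

variable (hab : a ≠ b) (hac : a ≠ c) (hbc : b ≠ c)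

@[simp] theorem embFinThree_apply_zero : embFinThree hab hac hbc 0 = a := rfl
@[simp] theorem embFinThree_apply_one : embFinThree hab hac hbc 1 = b := rfl
@[simp] theorem embFinThree_apply_two : embFinThree hab hac hbc 2 = c := rfl

end Function.Embedding

namespace MulAction

section

variable {G X : Type*} [Group G] [MulAction G X]

variable (X) in
def IsIntersecting (S : Set G) : Prop := ∀ x ∈ S, ∀ y ∈ S, ∃ β : X, x • β = y • β

theorem isIntersecting_subgroup_iff (S : Subgroup G) :
    IsIntersecting X (S : Set G) ↔ ∀ g ∈ S, ∃ β : X, g • β = β := by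
  refine ⟨fun h g hg => by simpa using h g hg 1 S.one_mem, fun h x hx y hy => ?_⟩
  obtain ⟨β, hβ⟩ := h (y⁻¹ * x) (S.mul_mem (S.inv_mem hy) hx)
  exact ⟨β, by rwa [mul_smul, inv_smul_eq_iff] at hβ⟩

theorem card_stabilizer_mul_card [IsPretransitive G X] (x : X) :
    Nat.card (stabilizer G x) * Nat.card X = Nat.card G := by
  rw [← index_stabilizer_of_transitive G x, Subgroup.card_mul_index]

theorem IsBlock.smul_mem_of_smul_mem {B : Set X} (hB : IsBlock G B) {g : G} {x y : X}
    (hx : x ∈ B) (hgx : g • x ∈ B) (hy : y ∈ B) : g • y ∈ B := by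
  rw [← hB.smul_eq_of_mem hx hgx]
  exact Set.smul_mem_smul_set hy

theorem exists_smul_eq_of_isMultiplyPretransitive_three [IsMultiplyPretransitive G X 3]
    {a b c a' b' c' : X} (hab : a ≠ b) (hac : a ≠ c) (hbc : b ≠ c)
    (hab' : a' ≠ b') (hac' : a' ≠ c') (hbc' : b' ≠ c') :
    ∃ g : G, g • a = a' ∧ g • b = b' ∧ g • c = c' := by
  obtain ⟨g, hg⟩ := exists_smul_eq G (Function.Embedding.embFinThree hab hac hbc)
    (Function.Embedding.embFinThree hab' hac' hbc')
  exact ⟨g, congr($hg 0), congr($hg 1), congr($hg 2)⟩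

end

section

variable (G X : Type*) [Group G] [MulAction G X]

abbrev permGroup : Subgroup (Equiv.Perm X) := (toPermHom G X).range

variable [FaithfulSMul G X]

noncomputable def toPermGroup : G ≃* permGroup G X :=
  MonoidHom.ofInjective (toPerm_injective (α := G) (β := X))

variable {G X}

theorem toPermGroup_smul (g : G) (x : X) : toPermGroup G X g • x = g • x := rfl

theorem card_stabilizer_permGroup (x : X) :
    Nat.card (stabilizer (permGroup G X) x) = Nat.card (stabilizer G x) := by
  have : stabilizer (permGroup G X) x = (stabilizer G x).map (toPermGroup G X).toMonoidHom := by
    ext t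
    obtain ⟨g, rfl⟩ := (toPermGroup G X).surjective t
    simp [toPermGroup_smul]
  rw [this]
  exact Subgroup.card_map_of_injective (toPermGroup G X).injective

instance [IsPreprimitive G X] : IsPreprimitive (permGroup G X) X :=
  IsPreprimitive.of_surjective
    (f := (⟨id, fun g x => (toPermGroup_smul g x).symm⟩ : X →ₑ[toPermGroup G X] X))
    Function.surjective_id

end

end MulAction

namespace Set.powersetCard

variable {G X : Type*} [Group G] [MulAction G X] [DecidableEq X]

def pair {a b : X} (h : a ≠ b) : powersetCard X 2 := ofCard (Finset.card_pair h)

@[simp]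
theorem mem_pair {a b x : X} (h : a ≠ b) : x ∈ pair h ↔ x = a ∨ x = b := by
  simp [pair, ofCard]

theorem pair_comm {a b : X} (h : a ≠ b) : pair h = pair h.symm :=
  Subtype.ext (Finset.pair_comm a b)

theorem smul_pair_eq {g : G} {a b c d : X} (hab : a ≠ b) (hcd : c ≠ d)
    (hac : g • a = c) (hbd : g • b = d) : g • pair hab = pair hcd := by
  apply Subtype.ext
  simp [pair, ofCard, Finset.smul_finset_insert, Finset.smul_finset_singleton, hac, hbd]

theorem exists_eq_pair (s : powersetCard X 2) : ∃ (a b : X) (hab : a ≠ b), s = pair hab := by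
  obtain ⟨x, y, hxy, hs⟩ := Finset.card_eq_two.mp s.prop
  exact ⟨x, y, hxy, Subtype.ext hs⟩

theorem exists_eq_pair_of_mem {s : powersetCard X 2} {a : X} (ha : a ∈ s) :
    ∃ (b : X) (hab : a ≠ b), s = pair hab := by
  obtain ⟨x, y, hxy, rfl⟩ := exists_eq_pair s
  rcases (mem_pair hxy).mp ha with rfl | rfl
  · exact ⟨y, hxy, rfl⟩
  · exact ⟨x, hxy.symm, pair_comm hxy⟩

theorem exists_smul_eq_self_of_sq_eq_one [Nontrivial X] {g : G} (hg : g ^ 2 = 1) :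
    ∃ s : powersetCard X 2, g • s = s := by
  have swapped (x : X) (hx : g • x ≠ x) : ∃ s : powersetCard X 2, g • s = s :=
    ⟨pair hx, by
      rw [smul_pair_eq hx hx.symm (by rw [← mul_smul, ← pow_two, hg, one_smul]) rfl]
      exact pair_comm _⟩
  obtain ⟨y, z, hyz⟩ := exists_pair_ne X
  by_cases hy : g • y = y
  · by_cases hz : g • z = z
    · exact ⟨pair hyz, smul_pair_eq hyz hyz hy hz⟩
    · exact swapped z hz
  · exact swapped y hy

theorem two_mul_card_stabilizer_eq [Finite X] [IsPretransitive G X]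
    [IsPretransitive G (powersetCard X 2)] (x : X) (s : powersetCard X 2) :
    2 * Nat.card (stabilizer G x) = (Nat.card X - 1) * Nat.card (stabilizer G s) := by
  have hx := card_stabilizer_mul_card (G := G) x
  have hs := card_stabilizer_mul_card (G := G) s
  obtain ⟨n, hn⟩ := Nat.exists_eq_add_one_of_ne_zero (Nat.card_pos_iff.mpr ⟨⟨x⟩, ‹_›⟩).ne'
  have hchoose : (n + 1) * n = (n + 1).choose 2 * 2 := by
    simpa using Nat.add_one_mul_choose_eq n 1
  rw [Set.powersetCard.card (α := X), hn] at hs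
  rw [hn] at hx
  rw [hn, Nat.add_sub_cancel]
  refine Nat.eq_of_mul_eq_mul_right (Nat.succ_pos n) ?_
  calc 2 * Nat.card (stabilizer G x) * (n + 1) = 2 * Nat.card G := by rw [← hx]; ring
    _ = Nat.card (stabilizer G s) * ((n + 1).choose 2 * 2) := by rw [← hs]; ring
    _ = n * Nat.card (stabilizer G s) * (n + 1) := by rw [← hchoose]; ring

section Blocks

variable [IsMultiplyPretransitive G X 3] {B : Set (powersetCard X 2)}

theorem eq_univ_of_isBlock_of_pair_mem_of_pair_mem (hB : IsBlock G B) {a b c : X}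
    (hab : a ≠ b) (hac : a ≠ c) (hbc : b ≠ c) (hb : pair hab ∈ B) (hc : pair hac ∈ B) :
    B = Set.univ := by
  have through_a (x : X) (hax : a ≠ x) : pair hax ∈ B := by
    by_cases hbx : b = x
    · subst hbx; exact hb
    obtain ⟨g, ga, gb, gc⟩ :=
      exists_smul_eq_of_isMultiplyPretransitive_three (G := G) hab hac hbc hab hax hbx
    rw [← smul_pair_eq hac hax ga gc]
    exact hB.smul_mem_of_smul_mem hb (by rwa [smul_pair_eq hab hab ga gb]) hc
  refine Set.eq_univ_of_forall fun s => ?_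
  by_cases has : a ∈ s
  · obtain ⟨x, hax, rfl⟩ := exists_eq_pair_of_mem has
    exact through_a x hax
  obtain ⟨x, y, hxy, rfl⟩ := exists_eq_pair s
  simp only [mem_pair, not_or] at has
  obtain ⟨hax, hay⟩ : a ≠ x ∧ a ≠ y := has
  -- `g` swaps `a` and `y` and fixes `x`, so it fixes `{a, y}` and maps `{a, x}` to `{x, y}`.
  obtain ⟨g, ga, gx, gy⟩ := exists_smul_eq_of_isMultiplyPretransitive_three (G := G)
    hax hay hxy hxy.symm hay.symm hax.symm
  rw [pair_comm hxy, ← smul_pair_eq hax hxy.symm ga gx]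
  refine hB.smul_mem_of_smul_mem (through_a y hay) ?_ (through_a x hax)
  rw [smul_pair_eq hay hay.symm ga gy, ← pair_comm]
  exact through_a y hay

theorem eq_univ_of_isBlock_of_mem_of_mem (hB : IsBlock G B) {s t : powersetCard X 2}
    (hs : s ∈ B) (ht : t ∈ B) (hst : s ≠ t) {x : X} (hxs : x ∈ s) (hxt : x ∈ t) :
    B = Set.univ := by
  obtain ⟨b, hxb, rfl⟩ := exists_eq_pair_of_mem hxs
  obtain ⟨c, hxc, rfl⟩ := exists_eq_pair_of_mem hxt
  have hbc : b ≠ c := by rintro rfl; exact hst rfl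
  exact eq_univ_of_isBlock_of_pair_mem_of_pair_mem hB hxb hxc hbc hs ht

theorem isPreprimitive_of_isMultiplyPretransitive_three [IsMultiplyPretransitive G X 2]
    (hsq : ∀ (g : G) {a b c : X}, a ≠ b → g • a = a → g • b = b → (g ^ 2) • c = c → g • c = c) :
    IsPreprimitive G (powersetCard X 2) where
  toIsPretransitive := isPretransitive_of_isMultiplyPretransitive G inferInstance
  isTrivialBlock_of_isBlock {B} hB := by
    rcases B.subsingleton_or_nontrivial with hsub | ⟨s, hs, t, ht, hst⟩
    · exact Or.inl hsub
    right
    by_cases hmeet : ∃ x, x ∈ s ∧ x ∈ t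
    · obtain ⟨x, hxs, hxt⟩ := hmeet
      exact eq_univ_of_isBlock_of_mem_of_mem hB hs ht hst hxs hxt
    obtain ⟨a, b, hab, rfl⟩ := exists_eq_pair s
    obtain ⟨c, d, hcd, rfl⟩ := exists_eq_pair t
    simp only [mem_pair, not_exists, not_and, not_or] at hmeet
    obtain ⟨hac, had⟩ := hmeet a (Or.inl rfl)
    obtain ⟨hbc, hbd⟩ := hmeet b (Or.inr rfl)
    -- `g` fixes `a` and `b` and maps `c` to `d`; by `hsq` it cannot map `d` back to `c`.
    obtain ⟨g, ga, gb, gc⟩ :=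
      exists_smul_eq_of_isMultiplyPretransitive_three (G := G) hab hac hbc hab had hbd
    have hgd : g • d ≠ c := fun h =>
      hcd ((hsq g hab ga gb (by rw [pow_two, mul_smul, gc, h])).symm.trans gc)
    have hdgd : d ≠ g • d := fun h => hcd (MulAction.injective g (gc.trans h))
    have hgt : pair hdgd ∈ B := by
      rw [← smul_pair_eq hcd hdgd gc rfl]
      exact hB.smul_mem_of_smul_mem hs (by rwa [smul_pair_eq hab hab ga gb]) ht
    refine eq_univ_of_isBlock_of_mem_of_mem hB ht hgt ?_ (x := d) (by simp) (by simp)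
    intro h
    have hc : c ∈ pair hdgd := h ▸ (by simp)
    exact ((mem_pair hdgd).mp hc).elim hcd fun h' => hgd h'.symm

end Blocks

end Set.powersetCard

namespace Projectivization

variable {F : Type*} [Field F]

theorem mk_eq_mk_iff_mul_eq_mul {v w : Fin 2 → F} (hv : v ≠ 0) (hw : w ≠ 0) :
    mk F v hv = mk F w hw ↔ v 0 * w 1 = v 1 * w 0 := by
  rw [mk_eq_mk_iff']
  constructor
  · rintro ⟨a, rfl⟩
    simp only [Pi.smul_apply, smul_eq_mul]
    ring
  · intro h
    have hw' : w 0 ≠ 0 ∨ w 1 ≠ 0 := by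
      by_contra! h'
      exact hw (funext fun i => by fin_cases i <;> simp [h'])
    rcases hw' with h0 | h1
    · refine ⟨v 0 / w 0, funext fun i => ?_⟩
      fin_cases i
      · exact div_mul_cancel₀ _ h0
      · show v 0 / w 0 * w 1 = v 1
        rw [div_mul_eq_mul_div, div_eq_iff h0, h]
    · refine ⟨v 1 / w 1, funext fun i => ?_⟩
      fin_cases i
      · show v 1 / w 1 * w 0 = v 0
        rw [div_mul_eq_mul_div, div_eq_iff h1, h]
      · exact div_mul_cancel₀ _ h1

theorem card_projectiveLine [Finite F] : Nat.card (ℙ F (Fin 2 → F)) = Nat.card F + 1 :=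
  card_of_finrank_two F _ (Module.finrank_fin_fun F)

variable (F)

-- The standard frame `∞ = [1 : 0]`, `0 = [0 : 1]`, `1 = [1 : 1]` of the projective line.
def infPt : ℙ F (Fin 2 → F) := mk F ![1, 0] (by simp)
def zeroPt : ℙ F (Fin 2 → F) := mk F ![0, 1] (by simp)
def onePt : ℙ F (Fin 2 → F) := mk F ![1, 1] (by simp)

variable {F}

theorem mk_eq_infPt_iff {v : Fin 2 → F} (hv : v ≠ 0) : mk F v hv = infPt F ↔ v 1 = 0 := by
  simp [infPt, mk_eq_mk_iff_mul_eq_mul, eq_comm]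

theorem mk_eq_zeroPt_iff {v : Fin 2 → F} (hv : v ≠ 0) : mk F v hv = zeroPt F ↔ v 0 = 0 := by
  simp [zeroPt, mk_eq_mk_iff_mul_eq_mul]

theorem infPt_ne_zeroPt : infPt F ≠ zeroPt F := by
  simp [infPt, mk_eq_zeroPt_iff]

theorem infPt_ne_onePt : infPt F ≠ onePt F := by
  simp [onePt, eq_comm (a := infPt F), mk_eq_infPt_iff]

theorem zeroPt_ne_onePt : zeroPt F ≠ onePt F := by
  simp [onePt, eq_comm (a := zeroPt F), mk_eq_zeroPt_iff]

end Projectivization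

namespace Matrix.SpecialLinearGroup

variable {F : Type*} [Field F]

theorem smul_mk_eq_mk_iff (g : SL(2, F)) {v w : Fin 2 → F} (hv : v ≠ 0) (hw : w ≠ 0) :
    g • mk F v hv = mk F w hw ↔
      (g 0 0 * v 0 + g 0 1 * v 1) * w 1 = (g 1 0 * v 0 + g 1 1 * v 1) * w 0 := by
  change mk F ((g : Matrix (Fin 2) (Fin 2) F) *ᵥ v) ((smul_ne_zero_iff_ne g).mpr hv) = _ ↔ _
  simp [mk_eq_mk_iff_mul_eq_mul]

theorem smul_infPt_eq_infPt_iff (g : SL(2, F)) : g • infPt F = infPt F ↔ g 1 0 = 0 := by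
  simp [infPt, -smul_mk, smul_mk_eq_mk_iff, eq_comm (a := (0 : F))]

theorem smul_zeroPt_eq_zeroPt_iff (g : SL(2, F)) : g • zeroPt F = zeroPt F ↔ g 0 1 = 0 := by
  simp [zeroPt, -smul_mk, smul_mk_eq_mk_iff]

theorem exists_mul_ne_mul : ∃ a b : SL(2, F), a * b ≠ b * a := by
  refine ⟨transvection zero_ne_one 1, transvection one_ne_zero 1, fun h => ?_⟩
  have h00 := congr_arg (fun g : SL(2, F) => g 0 0) h
  simp [transvection_coe, Matrix.mul_apply, Fin.sum_univ_two] at h00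

section CharTwo

variable [CharP F 2]

theorem center_eq_bot : Subgroup.center SL(2, F) = ⊥ := by
  refine (Subgroup.eq_bot_iff_forall _).mpr fun A hA => ?_
  obtain ⟨r, hr, hrA⟩ := mem_center_iff.mp hA
  rw [Fintype.card_fin, ← one_pow 2, CharTwo.sq_inj] at hr
  ext1
  simp [← hrA, hr]

theorem isSimpleGroup (hF : 4 ≤ Nat.card F) : IsSimpleGroup SL(2, F) :=
  have := ProjectiveSpecialLinearGroup.rank_two_simple hF
  ((QuotientGroup.quotientMulEquivOfEq center_eq_bot).trans
    QuotientGroup.quotientBot).symm.isSimpleGroup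

instance : FaithfulSMul SL(2, F) (ℙ F (Fin 2 → F)) :=
  faithfulSMul_iff.mpr fun g hg => by
    have : g ∈ (toPermHom SL(2, F) (ℙ F (Fin 2 → F))).ker := by
      ext x
      simp [hg]
    rwa [SL_mulAction_ker, center_eq_bot, Subgroup.mem_bot] at this

theorem exists_smul_onePt_eq [PerfectRing F 2] {c : ℙ F (Fin 2 → F)} (hc_inf : c ≠ infPt F)
    (hc_zero : c ≠ zeroPt F) :
    ∃ g : SL(2, F), g • infPt F = infPt F ∧ g • zeroPt F = zeroPt F ∧ g • onePt F = c := by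
  induction c using Projectivization.ind with | h v hv => ?_
  rw [ne_eq, mk_eq_infPt_iff] at hc_inf
  rw [ne_eq, mk_eq_zeroPt_iff] at hc_zero
  obtain ⟨t, ht⟩ := surjective_frobenius F 2 (v 0 / v 1)
  rw [frobenius_def] at ht
  have ht0 : t ≠ 0 := by
    rintro rfl
    exact div_ne_zero hc_zero hc_inf (by simpa using ht.symm)
  obtain ⟨g, hg⟩ : ∃ g : SL(2, F), (g : Matrix (Fin 2) (Fin 2) F) = !![t, 0; 0, t⁻¹] :=
    ⟨⟨_, by simp [ht0]⟩, rfl⟩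
  refine ⟨g, by simp [smul_infPt_eq_infPt_iff, hg], by simp [smul_zeroPt_eq_zeroPt_iff, hg], ?_⟩
  rw [onePt, smul_mk_eq_mk_iff]
  simp only [hg, of_apply, cons_val', cons_val_zero, cons_val_fin_one, mul_one, cons_val_one,
    add_zero, zero_add]
  field_simp
  rw [ht, div_mul_cancel₀ _ hc_inf]

theorem isMultiplyPretransitive_three [PerfectRing F 2] :
    IsMultiplyPretransitive SL(2, F) (ℙ F (Fin 2 → F)) 3 := by
  refine (isPretransitive_iff_base (Function.Embedding.embFinThree
    (infPt_ne_zeroPt (F := F)) infPt_ne_onePt zeroPt_ne_onePt)).mpr fun x => ?_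
  have hx (i j : Fin 3) (hij : i ≠ j) : x i ≠ x j := x.injective.ne hij
  obtain ⟨k, hk_inf, hk_zero⟩ := (is_two_pretransitive_iff (G := SL(2, F))).mp inferInstance
    infPt_ne_zeroPt (hx 0 1 (by decide))
  obtain ⟨d, hd_inf, hd_zero, hd_one⟩ := exists_smul_onePt_eq (c := k⁻¹ • x 2)
    (by rw [ne_eq, inv_smul_eq_iff, hk_inf]; exact (hx 0 2 (by decide)).symm)
    (by rw [ne_eq, inv_smul_eq_iff, hk_zero]; exact (hx 1 2 (by decide)).symm)
  refine ⟨k * d, ?_⟩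
  ext i
  fin_cases i <;> simp [mul_smul, hd_inf, hd_zero, hd_one, hk_inf, hk_zero]

theorem eq_one_of_sq_smul_eq {g : SL(2, F)} (hg_inf : g • infPt F = infPt F)
    (hg_zero : g • zeroPt F = zeroPt F) {c : ℙ F (Fin 2 → F)} (hc_inf : c ≠ infPt F)
    (hc_zero : c ≠ zeroPt F) (hc : (g ^ 2) • c = c) : g = 1 := by
  rw [smul_infPt_eq_infPt_iff] at hg_inf
  rw [smul_zeroPt_eq_zeroPt_iff] at hg_zero
  have hdet : g 0 0 * g 1 1 = 1 := by
    have := g.det_coe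
    rw [Matrix.det_fin_two, hg_inf, hg_zero] at this
    simpa using this
  induction c using Projectivization.ind with | h v hv => ?_
  rw [ne_eq, mk_eq_infPt_iff] at hc_inf
  rw [ne_eq, mk_eq_zeroPt_iff] at hc_zero
  rw [smul_mk_eq_mk_iff] at hc
  simp only [pow_two, coe_mul, mul_apply, Fin.sum_univ_two, hg_zero, hg_inf, mul_zero, add_zero,
    zero_mul, zero_add] at hc
  have hsq : g 0 0 ^ 2 = g 1 1 ^ 2 := by
    apply mul_right_cancel₀ (mul_ne_zero hc_zero hc_inf)
    linear_combination hc
  rw [CharTwo.sq_inj] at hsq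
  have h00 : g 0 0 = 1 := by
    rw [← CharTwo.sq_inj, one_pow, pow_two]
    nth_rw 2 [hsq]
    exact hdet
  ext i j
  fin_cases i <;> fin_cases j <;> simp [hg_inf, hg_zero, h00, ← hsq]

theorem smul_eq_self_of_sq_smul_eq_self (g : SL(2, F)) {a b c : ℙ F (Fin 2 → F)} (hab : a ≠ b)
    (ha : g • a = a) (hb : g • b = b) (hc : (g ^ 2) • c = c) : g • c = c := by
  by_cases hca : c = a
  · rwa [hca]
  by_cases hcb : c = b
  · rwa [hcb]
  obtain ⟨k, hk_inf, hk_zero⟩ :=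
    (is_two_pretransitive_iff (G := SL(2, F))).mp inferInstance infPt_ne_zeroPt hab
  suffices k⁻¹ * g * k = 1 by
    rw [show g = k * (k⁻¹ * g * k) * k⁻¹ by group, this, mul_one, mul_inv_cancel, one_smul]
  refine eq_one_of_sq_smul_eq (c := k⁻¹ • c) ?_ ?_ ?_ ?_ ?_
  · rw [mul_smul, mul_smul, hk_inf, ha, inv_smul_eq_iff, hk_inf]
  · rw [mul_smul, mul_smul, hk_zero, hb, inv_smul_eq_iff, hk_zero]
  · rwa [ne_eq, inv_smul_eq_iff, hk_inf]
  · rwa [ne_eq, inv_smul_eq_iff, hk_zero]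
  · rw [show (k⁻¹ * g * k) ^ 2 = k⁻¹ * g ^ 2 * k by rw [pow_two, pow_two]; group,
      mul_smul, mul_smul, smul_inv_smul, hc]

theorem sq_eq_one_or_exists_smul_eq_self {g : SL(2, F)} (hg : g • infPt F = infPt F) :
    g ^ 2 = 1 ∨ ∃ c ≠ infPt F, g • c = c := by
  rw [smul_infPt_eq_infPt_iff] at hg
  have hdet : g 0 0 * g 1 1 = 1 := by
    have := g.det_coe
    rw [Matrix.det_fin_two, hg] at this
    simpa using this
  by_cases h00 : g 0 0 = 1
  · left
    have h11 : g 1 1 = 1 := by simpa [h00] using hdet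
    ext i j
    fin_cases i <;> fin_cases j <;>
      simp [pow_two, Matrix.mul_apply, Fin.sum_univ_two, hg, h00, h11, CharTwo.add_self_eq_zero]
  · right
    have hd : g 1 1 - g 0 0 ≠ 0 := by
      intro h
      apply h00
      rw [← CharTwo.sq_inj, one_pow, pow_two]
      nth_rw 2 [← sub_eq_zero.mp h]
      exact hdet
    -- the second eigenline of the upper triangular matrix `g`
    refine ⟨mk F ![g 0 1, g 1 1 - g 0 0] (by simp [hd]),
      by rw [ne_eq, mk_eq_infPt_iff]; simpa using hd, ?_⟩
    rw [smul_mk_eq_mk_iff]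
    simp only [hg, Matrix.cons_val_zero, Matrix.cons_val_one, Matrix.cons_val_fin_one]
    ring

variable [DecidableEq (ℙ F (Fin 2 → F))]

instance isPreprimitive_pairs [PerfectRing F 2] :
    IsPreprimitive SL(2, F) (Set.powersetCard (ℙ F (Fin 2 → F)) 2) :=
  have := isMultiplyPretransitive_three (F := F)
  isPreprimitive_of_isMultiplyPretransitive_three smul_eq_self_of_sq_smul_eq_self

theorem exists_smul_pair_eq_self {g : SL(2, F)} (hg : g • infPt F = infPt F) :
    ∃ s : Set.powersetCard (ℙ F (Fin 2 → F)) 2, g • s = s := by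
  have : Nontrivial (ℙ F (Fin 2 → F)) := ⟨_, _, infPt_ne_zeroPt⟩
  rcases sq_eq_one_or_exists_smul_eq_self hg with hsq | ⟨c, hc, hgc⟩
  · exact exists_smul_eq_self_of_sq_eq_one hsq
  · exact ⟨pair hc, smul_pair_eq hc hc hgc hg⟩

variable [Finite F]

instance faithfulSMul_pairs : FaithfulSMul SL(2, F) (Set.powersetCard (ℙ F (Fin 2 → F)) 2) := by
  refine Set.powersetCard.faithfulSMul (by norm_num) ?_
  rw [ENat.card_eq_coe_natCard, card_projectiveLine]
  exact_mod_cast Nat.add_lt_add_right Finite.one_lt_card 1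

theorem mul_card_stabilizer_pair_lt {M : ℕ} (hM : 2 * M < Nat.card F)
    (s : Set.powersetCard (ℙ F (Fin 2 → F)) 2) :
    M * Nat.card (stabilizer SL(2, F) s) < Nat.card (stabilizer SL(2, F) (infPt F)) := by
  have h := two_mul_card_stabilizer_eq (G := SL(2, F)) (infPt F) s
  rw [card_projectiveLine, Nat.add_sub_cancel] at h
  have hpos : 0 < Nat.card (stabilizer SL(2, F) s) := Nat.card_pos
  nlinarith

end CharTwo

end Matrix.SpecialLinearGroup

open Matrix.SpecialLinearGroup

theorem stmt9_general (M : ℕ) :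
    ∃ (Δ : Type) (_ : Fintype Δ) (_ : Nonempty Δ) (T : Subgroup (Equiv.Perm Δ)),
      MulAction.IsPretransitive T Δ ∧
      (∀ α : Δ, IsCoatom (MulAction.stabilizer T α)) ∧
      IsSimpleGroup T ∧ (∃ a b : T, a * b ≠ b * a) ∧
      ∃ (α : Δ) (S : Subgroup T),
        (∀ x ∈ S, ∀ y ∈ S, ∃ β : Δ, x • β = y • β) ∧
        Nat.card S > M * Nat.card (MulAction.stabilizer T α) := by
  classical
  let F := GaloisField 2 (M + 2)
  have hq : Nat.card F = 2 * 2 * 2 ^ M := by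
    rw [GaloisField.card 2 (M + 2) (by omega), pow_add]
    ring
  have hM : 2 * M < Nat.card F := by
    have := Nat.lt_two_pow_self (n := M)
    omega
  have : IsSimpleGroup SL(2, F) := isSimpleGroup (by have := Nat.one_le_two_pow (n := M); omega)
  let Δ := Set.powersetCard (ℙ F (Fin 2 → F)) 2
  have : Nontrivial Δ :=
    Set.powersetCard.nontrivial' (by norm_num) (by rw [card_projectiveLine]; omega)
  let e := toPermGroup SL(2, F) Δ
  obtain ⟨a, b, hab⟩ := exists_mul_ne_mul (F := F)
  refine ⟨Δ, Fintype.ofFinite Δ, inferInstance, permGroup SL(2, F) Δ, inferInstance,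
    IsPreprimitive.isCoatom_stabilizer_of_isPreprimitive _, e.symm.isSimpleGroup,
    ⟨e a, e b, by simpa [← map_mul] using hab⟩, pair (infPt_ne_zeroPt (F := F)),
    (stabilizer SL(2, F) (infPt F)).map e.toMonoidHom, ?_, ?_⟩
  · refine (isIntersecting_subgroup_iff _).mpr fun t ht => ?_
    obtain ⟨g, hg, rfl⟩ := Subgroup.mem_map.mp ht
    exact exists_smul_pair_eq_self hg
  · rw [gt_iff_lt, Subgroup.card_map_of_injective (f := e.toMonoidHom) e.injective,
      card_stabilizer_permGroup]
    exact mul_card_stabilizer_pair_lt hM _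

/-- For every natural number `M > 0` there exist a finite nonempty
set `Δ`, a primitive transitive permutation group `T ≤ Sym(Δ)` which is a
nonabelian simple group, a point `α ∈ Δ`, and an intersecting subgroup `S ≤ T`
with `|S| > M · |T_α|`. -/
theorem stmt9 (M : ℕ) (hM : 0 < M) :
    ∃ (Δ : Type) (_ : Fintype Δ) (_ : Nonempty Δ) (T : Subgroup (Equiv.Perm Δ)),
      MulAction.IsPretransitive T Δ ∧
      (∀ α : Δ, IsCoatom (MulAction.stabilizer T α)) ∧
      IsSimpleGroup T ∧ (∃ a b : T, a * b ≠ b * a) ∧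
      ∃ (α : Δ) (S : Subgroup T),
        (∀ x ∈ S, ∀ y ∈ S, ∃ β : Δ, x • β = y • β) ∧
        Nat.card S > M * Nat.card (MulAction.stabilizer T α) :=
  stmt9_general M
end

section
/- Let G be a finite group with a nontrivial normal subgroup K ⊴ G and a nontrivial subgroup H ≤ G such that K ∩ H = {1}, G = K·H, and for all h ∈ H with h ≠ 1 and all k ∈ K with k ≠ 1, h·k·h⁻¹ ≠ k (so G is a Frobenius group with kernel K and complement H), acting by left multiplication on G/H. Then every maximum intersecting set of G is a left coset of a point stabilizer (i.e. of a conjugate of H) if and only if |H| = 2; that is, G has the strict-EKR property if and only if |H| = 2. -/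
/-!
Elements of `K \ {1}` fix no point of `G ⧸ H`, while every `g ∉ K` fixes one: writing `g = k h`
with `1 ≠ h ∈ H`, the map `m ↦ m h m⁻¹ h⁻¹` is injective on `K` (this is the Frobenius condition),
hence onto, so `g` is `K`-conjugate to `h`. Therefore `x` and `y` intersect iff `x = y` or
`x K ≠ y K`: intersecting sets are exactly the sets on which `G → G ⧸ K` is injective, and the
maximum size is `|G ⧸ K| = |H|`.

If `|H| = 2`, a maximum intersecting set `{x, y}` lies in `x • Stab α` for a point `α` fixed by
`x⁻¹ y`, and both have two elements. If `|H| > 2`, replace some `h₀ ∈ H \ {1}` by `k₀ h₀` with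
`1 ≠ k₀ ∈ K`: the result is still a maximum intersecting set, and it contains `1` but is not closed
under multiplication (`h₀ = h₁ (h₁⁻¹ h₀)`), so it is not a coset of any subgroup.
-/

open scoped Pointwise

def IsIntersecting (Ω : Type*) {G : Type*} [SMul G Ω] (S : Set G) : Prop :=
  ∀ x ∈ S, ∀ y ∈ S, ∃ α : Ω, x • α = y • α

section

variable {G : Type*} [Group G]

theorem smul_coe_eq_coe_of_one_mem (P : Subgroup G) {a : G} (h : 1 ∈ a • (P : Set G)) :
    a • (P : Set G) = P := by
  obtain ⟨p, hp, hap⟩ := Set.mem_smul_set.mp h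
  refine leftCoset_mem_leftCoset P ?_
  rw [eq_inv_of_mul_eq_one_left hap]
  exact inv_mem hp

theorem insert_diff_singleton_ne_smul_coe {H : Subgroup G} {h₀ h₁ z : G} (hh₀ : h₀ ∈ H)
    (hh₁ : h₁ ∈ H) (h₀_ne_one : h₀ ≠ 1) (h₁_ne_one : h₁ ≠ 1) (h₁_ne_h₀ : h₁ ≠ h₀) (hz : z ≠ h₀)
    (P : Subgroup G) (a : G) : insert z ((H : Set G) \ {h₀}) ≠ a • (P : Set G) := by
  intro hS
  have hone : (1 : G) ∈ insert z ((H : Set G) \ {h₀}) := .inr ⟨one_mem H, h₀_ne_one.symm⟩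
  rw [smul_coe_eq_coe_of_one_mem P (hS ▸ hone)] at hS
  have hmem {g : G} (hg : g ∈ H) (hne : g ≠ h₀) : g ∈ P := by
    rw [← SetLike.mem_coe, ← hS]
    exact .inr ⟨hg, hne⟩
  have hh₀P : h₀ ∈ P := by
    simpa using mul_mem (hmem hh₁ h₁_ne_h₀)
      (hmem (mul_mem (inv_mem hh₁) hh₀) (by simpa using h₁_ne_one))
  rw [← SetLike.mem_coe, ← hS] at hh₀P
  rcases hh₀P with h | h
  · exact hz h.symm
  · exact h.2 rfl

theorem card_stabilizer_quotient (H : Subgroup G) (q : G ⧸ H) :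
    Nat.card (MulAction.stabilizer G q) = Nat.card H := by
  obtain ⟨g, rfl⟩ := QuotientGroup.mk_surjective q
  have hg : (g : G ⧸ H) = g • ((1 : G) : G ⧸ H) := by simp
  rw [← Nat.card_congr (MulAction.stabilizerEquivStabilizer hg).toEquiv,
    MulAction.stabilizer_quotient]

theorem exists_eq_smul_stabilizer_of_ncard_eq_two {Ω : Type*} [MulAction G Ω]
    (hstab : ∀ α : Ω, Nat.card (MulAction.stabilizer G α) = 2) {S : Set G}
    (hS : IsIntersecting Ω S) (hS2 : S.ncard = 2) :
    ∃ (a : G) (α : Ω), S = a • (MulAction.stabilizer G α : Set G) := by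
  obtain ⟨x, y, -, rfl⟩ := Set.ncard_eq_two.mp hS2
  obtain ⟨α, hα⟩ := hS y (by simp) x (by simp)
  have hxy : x⁻¹ * y ∈ MulAction.stabilizer G α := by
    rw [MulAction.mem_stabilizer_iff, mul_smul, hα, inv_smul_smul]
  have : Finite (MulAction.stabilizer G α) := Nat.finite_of_card_ne_zero (by rw [hstab]; norm_num)
  refine ⟨x, α, Set.eq_of_subset_of_ncard_le ?_ ?_ ((Set.toFinite _).smul_set)⟩
  · rintro z (rfl | rfl)
    · exact Set.mem_smul_set.mpr ⟨1, one_mem _, mul_one z⟩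
    · exact Set.mem_smul_set.mpr ⟨x⁻¹ * z, hxy, mul_inv_cancel_left x z⟩
  · rw [Set.ncard_smul_set, ← Nat.card_coe_set_eq, hS2]
    exact (hstab α).le

end

section Frobenius

variable {G : Type*} [Group G] {K H : Subgroup G}

theorem exists_mem_mul_mul_inv_eq_mul [K.Normal] [Finite K] {h : G}
    (hfix : ∀ k ∈ K, k ≠ 1 → h * k * h⁻¹ ≠ k) {k : G} (hk : k ∈ K) :
    ∃ m ∈ K, m * h * m⁻¹ = k * h := by
  let f : K → K := fun m => ⟨m * (h * (m : G)⁻¹ * h⁻¹),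
    mul_mem m.2 (‹K.Normal›.conj_mem _ (inv_mem m.2) h)⟩
  have hinj : f.Injective := by
    intro m m' hmm'
    have heq : (m : G) * (h * (m : G)⁻¹ * h⁻¹) = m' * (h * (m' : G)⁻¹ * h⁻¹) :=
      congrArg Subtype.val hmm'
    by_contra hne
    refine hfix ((m' : G)⁻¹ * m) (mul_mem (inv_mem m'.2) m.2) ?_ ?_
    · rwa [Ne, inv_mul_eq_one, eq_comm, ← Subtype.ext_iff]
    · calc h * ((m' : G)⁻¹ * m) * h⁻¹
          = (m' : G)⁻¹ * (m' * (h * (m' : G)⁻¹ * h⁻¹)) * (m * (h * (m : G)⁻¹ * h⁻¹))⁻¹ * m := by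
            group
        _ = (m' : G)⁻¹ * m := by rw [heq]; group
  obtain ⟨m, hm⟩ := Finite.injective_iff_surjective.mp hinj ⟨k, hk⟩
  have hmk : (m : G) * (h * (m : G)⁻¹ * h⁻¹) = k := congrArg Subtype.val hm
  refine ⟨m, m.2, ?_⟩
  rw [← hmk]
  group

theorem exists_smul_eq_self_of_notMem [Finite G] [K.Normal] (hc : K.IsComplement' H)
    (hfrob : ∀ h ∈ H, h ≠ 1 → ∀ k ∈ K, k ≠ 1 → h * k * h⁻¹ ≠ k) {g : G} (hg : g ∉ K) :
    ∃ α : G ⧸ H, g • α = α := by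
  obtain ⟨⟨⟨k, hk⟩, ⟨h, hh⟩⟩, hkh⟩ := hc.2 g
  obtain rfl : k * h = g := hkh
  have hh1 : h ≠ 1 := by
    rintro rfl
    exact hg (by simpa using hk)
  obtain ⟨m, -, hm⟩ := exists_mem_mul_mul_inv_eq_mul (hfrob h hh hh1) hk
  refine ⟨(m : G ⧸ H), ?_⟩
  rw [MulAction.Quotient.smul_mk, smul_eq_mul, QuotientGroup.eq, ← hm]
  simpa [mul_assoc] using inv_mem hh

theorem eq_one_of_mem_of_smul_eq_self [K.Normal] (hdisj : Disjoint K H) {g : G} (hg : g ∈ K)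
    {α : G ⧸ H} (hα : g • α = α) : g = 1 := by
  obtain ⟨x, rfl⟩ := QuotientGroup.mk_surjective α
  rw [MulAction.Quotient.smul_mk, smul_eq_mul, QuotientGroup.eq] at hα
  have hconj : x⁻¹ * g⁻¹ * x = 1 := Subgroup.disjoint_def.mp hdisj
    (by simpa using ‹K.Normal›.conj_mem _ (inv_mem hg) x⁻¹) (by simpa [mul_assoc] using hα)
  simpa [mul_assoc, inv_mul_eq_one] using hconj

theorem exists_smul_eq_smul_iff [Finite G] [K.Normal] (hc : K.IsComplement' H)
    (hfrob : ∀ h ∈ H, h ≠ 1 → ∀ k ∈ K, k ≠ 1 → h * k * h⁻¹ ≠ k) {x y : G} :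
    (∃ α : G ⧸ H, x • α = y • α) ↔ ((x : G ⧸ K) = y → x = y) := by
  have hshift : (∃ α : G ⧸ H, x • α = y • α) ↔ ∃ α : G ⧸ H, (y⁻¹ * x) • α = α := by
    simp only [mul_smul, inv_smul_eq_iff]
  rw [hshift, QuotientGroup.eq, ← inv_mem_iff, mul_inv_rev, inv_inv]
  constructor
  · rintro ⟨α, hα⟩ hK
    exact (inv_mul_eq_one.mp (eq_one_of_mem_of_smul_eq_self hc.disjoint hK hα)).symm
  · intro h
    by_cases hK : y⁻¹ * x ∈ K
    · rw [h hK, inv_mul_cancel]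
      exact ⟨((1 : G) : G ⧸ H), one_smul G _⟩
    · exact exists_smul_eq_self_of_notMem hc hfrob hK

theorem isIntersecting_iff_injOn [Finite G] [K.Normal] (hc : K.IsComplement' H)
    (hfrob : ∀ h ∈ H, h ≠ 1 → ∀ k ∈ K, k ≠ 1 → h * k * h⁻¹ ≠ k) {S : Set G} :
    IsIntersecting (G ⧸ H) S ↔ S.InjOn (QuotientGroup.mk : G → G ⧸ K) := by
  simp only [IsIntersecting, exists_smul_eq_smul_iff hc hfrob, Set.InjOn]

theorem injOn_mk_of_disjoint (hdisj : Disjoint K H) :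
    (H : Set G).InjOn (QuotientGroup.mk : G → G ⧸ K) := by
  intro x hx y hy hxy
  rw [QuotientGroup.eq] at hxy
  rw [← inv_mul_eq_one]
  exact Subgroup.disjoint_def.mp hdisj hxy (mul_mem (inv_mem hx) hy)

theorem ncard_le_card_of_injOn_mk [Finite G] (hc : K.IsComplement' H) {S : Set G}
    (hS : S.InjOn (QuotientGroup.mk : G → G ⧸ K)) : S.ncard ≤ Nat.card H := by
  calc S.ncard ≤ (Set.univ : Set (G ⧸ K)).ncard :=
        Set.ncard_le_ncard_of_injOn _ (fun _ _ => Set.mem_univ _) hS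
    _ = Nat.card H := by rw [Set.ncard_univ, ← Subgroup.index, hc.symm.index_eq_card]

theorem exists_isIntersecting_ncard_eq_ne_smul_stabilizer [Finite G] [K.Normal]
    (hc : K.IsComplement' H) (hfrob : ∀ h ∈ H, h ≠ 1 → ∀ k ∈ K, k ≠ 1 → h * k * h⁻¹ ≠ k)
    (hK : K ≠ ⊥) (hH : 2 < Nat.card H) :
    ∃ S : Set G, IsIntersecting (G ⧸ H) S ∧ S.ncard = Nat.card H ∧
      ∀ (a : G) (q : G ⧸ H), S ≠ a • (MulAction.stabilizer G q : Set G) := by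
  obtain ⟨k₀, hk₀, hk₀_ne_one⟩ := (K.bot_or_exists_ne_one).resolve_left hK
  have hHcard : (H : Set G).ncard = Nat.card H := (Nat.card_coe_set_eq _).symm
  obtain ⟨h₀, hh₀, h₀_ne_one⟩ :=
    Set.exists_ne_of_one_lt_ncard (s := (H : Set G)) (by omega) (1 : G)
  obtain ⟨h₁, ⟨hh₁, h₁_ne_one⟩, h₁_ne_h₀⟩ := Set.exists_ne_of_one_lt_ncard
    (by rw [Set.ncard_sdiff_singleton_of_mem (one_mem H), hHcard]; omega) h₀
  have hk₀h₀ : k₀ * h₀ ∉ (H : Set G) := fun h => hk₀_ne_one <|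
    Subgroup.disjoint_def.mp hc.disjoint hk₀ (by simpa using mul_mem h (inv_mem hh₀))
  have hmk : ((k₀ * h₀ : G) : G ⧸ K) = h₀ := by
    rw [QuotientGroup.mk_mul, (QuotientGroup.eq_one_iff k₀).mpr hk₀, one_mul]
  refine ⟨insert (k₀ * h₀) ((H : Set G) \ {h₀}), ?_, ?_, fun a q =>
    insert_diff_singleton_ne_smul_coe hh₀ hh₁ h₀_ne_one h₁_ne_one h₁_ne_h₀
      (by simpa using hk₀_ne_one) _ a⟩
  · rw [isIntersecting_iff_injOn hc hfrob, Set.injOn_insert (fun h => hk₀h₀ h.1), hmk]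
    refine ⟨(injOn_mk_of_disjoint hc.disjoint).mono Set.sdiff_subset, ?_⟩
    rintro ⟨h, ⟨hh, hne⟩, he⟩
    exact hne (injOn_mk_of_disjoint hc.disjoint hh hh₀ he)
  · rw [Set.ncard_insert_of_notMem (fun h => hk₀h₀ h.1), Set.ncard_sdiff_singleton_add_one hh₀,
      hHcard]

end Frobenius

/-- Let `G` be a finite Frobenius group with kernel `K` and
complement `H`, acting by left multiplication on `G ⧸ H`.  Then every maximum
intersecting set of `G` is a left coset of a point stabilizer if and only if
`|H| = 2`; that is, `G` has the strict-EKR property iff `|H| = 2`. -/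
theorem stmt17 {G : Type*} [Group G] [Finite G] (K H : Subgroup G) [K.Normal]
    (hK : K ≠ ⊥) (hH : H ≠ ⊥) (hKH : K ⊓ H = ⊥)
    (hprod : ∀ g : G, ∃ k ∈ K, ∃ h ∈ H, g = k * h)
    (hfrob : ∀ h ∈ H, h ≠ 1 → ∀ k ∈ K, k ≠ 1 → h * k * h⁻¹ ≠ k) :
    (∀ S : Set G,
        (∀ x ∈ S, ∀ y ∈ S, ∃ α : G ⧸ H, x • α = y • α) →
        (∀ T : Set G, (∀ x ∈ T, ∀ y ∈ T, ∃ α : G ⧸ H, x • α = y • α) →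
          T.ncard ≤ S.ncard) →
        ∃ (a : G) (q : G ⧸ H),
          S = a • ((MulAction.stabilizer G q : Subgroup G) : Set G)) ↔
      Nat.card H = 2 := by
  have hc : K.IsComplement' H := by
    refine Subgroup.isComplement'_of_disjoint_and_mul_eq_univ (disjoint_iff.mpr hKH) ?_
    refine Set.eq_univ_of_forall fun g => ?_
    obtain ⟨k, hk, h, hh, rfl⟩ := hprod g
    exact Set.mul_mem_mul hk hh
  have hbound (T : Set G) (hT : IsIntersecting (G ⧸ H) T) : T.ncard ≤ Nat.card H :=
    ncard_le_card_of_injOn_mk hc ((isIntersecting_iff_injOn hc hfrob).mp hT)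
  constructor
  · intro hEKR
    by_contra h2
    have hH2 : 2 < Nat.card H := by
      have h1 : Nat.card H ≠ 1 := fun h => hH (Subgroup.card_eq_one.mp h)
      have h0 : 0 < Nat.card H := Nat.card_pos
      omega
    obtain ⟨S, hS, hScard, hne⟩ :=
      exists_isIntersecting_ncard_eq_ne_smul_stabilizer hc hfrob hK hH2
    obtain ⟨a, q, rfl⟩ := hEKR S hS fun T hT => hScard ▸ hbound T hT
    exact hne a q rfl
  · intro h2 S hS hSmax
    refine exists_eq_smul_stabilizer_of_ncard_eq_two
      (fun q => (card_stabilizer_quotient H q).trans h2) hS (le_antisymm (h2 ▸ hbound S hS) ?_)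
    have hHint : IsIntersecting (G ⧸ H) (H : Set G) :=
      (isIntersecting_iff_injOn hc hfrob).mpr (injOn_mk_of_disjoint hc.disjoint)
    simpa [← Nat.card_coe_set_eq, h2] using hSmax H hHint
end
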